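/- arXiv:math-ph/0004020 — 2 statements merged into one kernel-verified Lean document; each statement's English description precedes it below -/
import Mathlib

section
/- (i) A form a ∈ 𝔓^{n−1}M is admissible if and only if dx^β(Ξ(a)) = 0 for every β = 1,…,n. (ii) For any admissible a ∈ 𝔓^{n−1}M, the external 𝔭-bracket and the ω-bracket with Hω coincide: {Hω, a} = {Hω, a}_ω, and both equal −( Ξ(a) ⨼ dH ) ω. -/
open scoped BigOperators

noncomputable section

/-- Increasing multi-indices `μ₁ < … < μₙ` in `{1,…,N}`, encoded as `n`-element subsets. -/
abbrev MultiIdx (N n : ℕ) : Type := {s : Finset (Fin N) // s.card = n}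

/-- `μ_a` : the `a`-th element (in increasing order) of the multi-index `s`. -/
def midx {N n : ℕ} (s : MultiIdx N n) (a : Fin n) : Fin N :=
  ((s.1.orderIsoOfFin s.2) a : Fin N)

/-- The multimomentum phase space `M = ℝ^{n+k} × Λⁿ(ℝ^{n+k})*`, with coordinates
`(q^μ, p_{μ₁…μₙ})`. -/
abbrev Phase (n k : ℕ) : Type := (Fin (n + k) → ℝ) × (MultiIdx (n + k) n → ℝ)

/-- Evaluation of the Cartan–Poincaré form `θ = Σ_{μ₁<…<μₙ} p_{μ₁…μₙ} dq^{μ₁}∧…∧dq^{μₙ}`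
on an `n`-tuple of tangent vectors of `M`. -/
def thetaEval (n k : ℕ) (m : Phase n k) (w : Fin n → Phase n k) : ℝ :=
  ∑ s : MultiIdx (n + k) n,
    m.2 s * Matrix.det (Matrix.of fun a b : Fin n => (w b).1 (midx s a))

/-- Evaluation of the pataplectic form
`Ω = dθ = Σ_{μ₁<…<μₙ} dp_{μ₁…μₙ} ∧ dq^{μ₁}∧…∧dq^{μₙ}` on an `(n+1)`-tuple of tangent
vectors of `M` (each summand is the determinant of the matrix of the coordinates
`(p_{μ₁…μₙ}, q^{μ₁}, …, q^{μₙ})` of the `n+1` vectors). -/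
def OmegaEval (n k : ℕ) (w : Fin (n + 1) → Phase n k) : ℝ :=
  ∑ s : MultiIdx (n + k) n,
    Matrix.det (Matrix.of fun a b : Fin (n + 1) =>
      (Fin.cons ((w b).2 s) (fun j : Fin n => (w b).1 (midx s j)) : Fin (n+1) → ℝ) a)

/-- Evaluation of the volume form `ω = dx¹ ∧ … ∧ dxⁿ` on tangent vectors of `M`. -/
def volEval (n k : ℕ) (w : Fin n → Phase n k) : ℝ :=
  Matrix.det (Matrix.of fun a b : Fin n => (w b).1 (Fin.castAdd k a))

/-- Evaluation formula for the exterior differential of a `p`-form `φ` (given by its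
evaluation function):
`dφ(x)(w₀,…,w_p) = Σ_i (−1)^i (∂_{w_i} φ)(x)(w₀,…,ŵ_i,…,w_p)`. -/
def dEval {E : Type*} [NormedAddCommGroup E] [NormedSpace ℝ E] {p : ℕ}
    (φ : E → (Fin p → E) → ℝ) (m : E) (w : Fin (p + 1) → E) : ℝ :=
  ∑ i : Fin (p + 1), (-1 : ℝ) ^ (i : ℕ) *
    fderiv ℝ (fun m' => φ m' (w ∘ i.succAbove)) m (w i)

/-- An `n`-vector field on `M`, represented as a (pointwise) sum of `r` decomposable
`n`-vectors `X_{j1} ∧ … ∧ X_{jn}` (every section of `ΛⁿTM` is of this form). -/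
abbrev NVecField (d k r : ℕ) : Type :=
  Phase (d + 1) k → Fin r → Fin (d + 1) → Phase (d + 1) k

/-- `X` is `H`-Hamiltonian: `(−1)ⁿ X ⨼ Ω = dH mod ℐ`, where `ℐ` is the ideal generated by
`dx¹, …, dxⁿ`. -/
def IsHamiltonian (d k r : ℕ) (H : Phase (d + 1) k → ℝ) (X : NVecField d k r) : Prop :=
  ∀ m : Phase (d + 1) k, ∃ c : Fin (d + 1) → ℝ, ∀ V : Phase (d + 1) k,
    (-1 : ℝ) ^ (d + 1) * ∑ j : Fin r, OmegaEval (d + 1) k (Fin.snoc (X m j) V)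
      = fderiv ℝ H m V + ∑ β : Fin (d + 1), c β * V.1 (Fin.castAdd k β)

/-- For an `(n−1)`-form `a`, `X ♯ a := (X ⨼ da) ω`. -/
def sharp (d k r : ℕ) (X : NVecField d k r)
    (a : Phase (d + 1) k → AlternatingMap ℝ (Phase (d + 1) k) ℝ (Fin d))
    (m : Phase (d + 1) k) (v : Fin (d + 1) → Phase (d + 1) k) : ℝ :=
  (∑ j : Fin r, dEval (fun m' u => a m' u) m (X m j)) * volEval (d + 1) k v

/-- The `(n−1)`-form `a` is admissible: for every Hamiltonian `H'` and every
`H'`-Hamiltonian `n`-vector field `X`, `X ♯ a` does not depend on the choice of `X`. -/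
def Admissible (d k : ℕ)
    (a : Phase (d + 1) k → AlternatingMap ℝ (Phase (d + 1) k) ℝ (Fin d)) : Prop :=
  ∀ H' : Phase (d + 1) k → ℝ, ContDiff ℝ (⊤ : ℕ∞) H' →
    ∀ (r r' : ℕ) (X : NVecField d k r) (X' : NVecField d k r'),
      IsHamiltonian d k r H' X → IsHamiltonian d k r' H' X' →
      ∀ (m : Phase (d + 1) k) (v : Fin (d + 1) → Phase (d + 1) k),
        sharp d k r X a m v = sharp d k r' X' a m v


/-! ### Auxiliary lemmas -/

/-- Rotating the first argument of `Ω` to the last position costs `(-1)^n`. -/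
lemma omega_cons_eq (n k : ℕ) (x : Phase n k) (w : Fin n → Phase n k) :
    OmegaEval n k (Fin.cons x w) = (-1 : ℝ) ^ n * OmegaEval n k (Fin.snoc w x) := by
  have hsign : (((Equiv.Perm.sign (finRotate (n+1)) : ℤˣ) : ℤ) : ℝ) = (-1 : ℝ) ^ n := by
    rw [sign_finRotate]; push_cast; ring
  unfold OmegaEval
  rw [Finset.mul_sum]
  refine Finset.sum_congr rfl fun s _ => ?_
  have hrot : (Fin.snoc w x : Fin (n+1) → Phase n k)
      = fun b => (Fin.cons x w : Fin (n+1) → Phase n k) (finRotate (n+1) b) := by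
    exact Fin.snoc_eq_cons_rotate w x
  have : (Matrix.of fun a b : Fin (n + 1) =>
      (Fin.cons (((Fin.snoc w x : Fin (n+1) → Phase n k) b).2 s)
        (fun j : Fin n => ((Fin.snoc w x : Fin (n+1) → Phase n k) b).1 (midx s j)) : Fin (n+1) → ℝ) a)
      = (Matrix.of fun a b : Fin (n + 1) =>
      (Fin.cons (((Fin.cons x w : Fin (n+1) → Phase n k) b).2 s)
        (fun j : Fin n => ((Fin.cons x w : Fin (n+1) → Phase n k) b).1 (midx s j)) : Fin (n+1) → ℝ) a).submatrix
        id (finRotate (n+1)) := by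
    ext a b
    rw [hrot]
    rfl
  rw [this, Matrix.det_permute', hsign]
  have h1 : ((-1:ℝ)^n) * ((-1:ℝ)^n) = 1 := by
    rw [← pow_add]; exact Even.neg_one_pow ⟨n, rfl⟩
  rw [← mul_assoc, h1, one_mul]

/-- The key computation: `X ♯ a` for an `H'`-Hamiltonian `X` with explicit `c`. -/
lemma sharp_eq (d k r : ℕ)
    (a : Phase (d + 1) k → AlternatingMap ℝ (Phase (d + 1) k) ℝ (Fin d))
    (ξa : Phase (d + 1) k → Phase (d + 1) k)
    (hdefa : ∀ (m : Phase (d + 1) k) (w : Fin (d + 1) → Phase (d + 1) k),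
      dEval (fun m' v => a m' v) m w = - OmegaEval (d + 1) k (Fin.cons (ξa m) w))
    (H' : Phase (d + 1) k → ℝ) (X : NVecField d k r)
    (m : Phase (d + 1) k) (c : Fin (d + 1) → ℝ)
    (hc : ∀ V : Phase (d + 1) k,
      (-1 : ℝ) ^ (d + 1) * ∑ j : Fin r, OmegaEval (d + 1) k (Fin.snoc (X m j) V)
        = fderiv ℝ H' m V + ∑ β : Fin (d + 1), c β * V.1 (Fin.castAdd k β))
    (v : Fin (d + 1) → Phase (d + 1) k) :
    sharp d k r X a m v
      = -(fderiv ℝ H' m (ξa m)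
          + ∑ β : Fin (d + 1), c β * (ξa m).1 (Fin.castAdd k β)) * volEval (d + 1) k v := by
  unfold sharp
  have hsum : (∑ j : Fin r, dEval (fun m' u => a m' u) m (X m j))
      = -(fderiv ℝ H' m (ξa m) + ∑ β : Fin (d + 1), c β * (ξa m).1 (Fin.castAdd k β)) := by
    have h1 : ∀ j : Fin r, dEval (fun m' u => a m' u) m (X m j)
        = -((-1 : ℝ) ^ (d+1) * OmegaEval (d + 1) k (Fin.snoc (X m j) (ξa m))) := by
      intro j
      rw [hdefa m (X m j), omega_cons_eq]
    rw [Finset.sum_congr rfl fun j _ => h1 j]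
    rw [Finset.sum_neg_distrib, ← Finset.mul_sum, hc (ξa m)]
  rw [hsum]

/-- `Ω` vanishes if one argument is zero. -/
lemma omega_zero_arg (n k : ℕ) (w : Fin (n + 1) → Phase n k) (b₀ : Fin (n + 1))
    (hb : w b₀ = 0) : OmegaEval n k w = 0 := by
  unfold OmegaEval
  refine Finset.sum_eq_zero fun s _ => ?_
  refine Matrix.det_eq_zero_of_column_eq_zero b₀ fun a => ?_
  show (Fin.cons ((w b₀).2 s) (fun j : Fin n => (w b₀).1 (midx s j)) : Fin (n+1) → ℝ) a = 0
  rw [hb]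
  refine Fin.cases ?_ (fun i => ?_) a <;> simp

/-- The distinguished multi-index `{1,…,n}`. -/
def stdIdx (d k : ℕ) : MultiIdx (d + 1 + k) (d + 1) :=
  ⟨(Finset.univ : Finset (Fin (d + 1))).map
      ⟨Fin.castAdd k, fun x y hxy => Fin.ext (by simpa using congrArg Fin.val hxy)⟩,
    by simp⟩

lemma midx_stdIdx (d k : ℕ) (j : Fin (d + 1)) : midx (stdIdx d k) j = Fin.castAdd k j := by
  unfold midx
  rw [Finset.coe_orderIsoOfFin_apply]
  have hmem : ∀ x : Fin (d+1), Fin.castAdd k x ∈ (stdIdx d k).1 := by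
    intro x
    simp [stdIdx]
    exact ⟨x, rfl⟩
  have hmono : StrictMono (fun x : Fin (d+1) => Fin.castAdd k x) := by
    intro x y h
    rw [Fin.lt_def] at h ⊢
    simpa using h
  rw [← Finset.orderEmbOfFin_unique (stdIdx d k).2 hmem hmono]

/-- The standard frame `(∂/∂x¹, …, ∂/∂xⁿ)` and its volume. -/
def stdFrame (d k : ℕ) : Fin (d + 1) → Phase (d + 1) k :=
  fun b => (Pi.single (Fin.castAdd k b) (1 : ℝ), 0)

lemma vol_stdFrame (d k : ℕ) : volEval (d + 1) k (stdFrame d k) = 1 := by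
  unfold volEval
  have : (Matrix.of fun a b : Fin (d+1) => (stdFrame d k b).1 (Fin.castAdd k a))
      = (1 : Matrix (Fin (d+1)) (Fin (d+1)) ℝ) := by
    ext a b
    simp only [Matrix.of_apply, stdFrame, Pi.single_apply, Matrix.one_apply]
    by_cases h : a = b
    · simp [h]
    · rw [if_neg, if_neg h]
      intro hh
      exact h (Fin.ext (by simpa using congrArg Fin.val hh))
  rw [this, Matrix.det_one]

/-- The constructed decomposable `n`-vector dual to direction `β₀`. -/
def Yvec (d k : ℕ) (β₀ : Fin (d + 1)) : Fin (d + 1) → Phase (d + 1) k :=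
  Fin.cons ((0 : Fin (d + 1 + k) → ℝ), Pi.single (stdIdx d k) (1 : ℝ))
    (fun i : Fin d => ((Pi.single (Fin.castAdd k (β₀.succAbove i)) (1 : ℝ) : Fin (d+1+k) → ℝ),
      (0 : MultiIdx (d + 1 + k) (d + 1) → ℝ)))

/-- The column permutation used to normalize the determinant. -/
def ρperm (d : ℕ) (β₀ : Fin (d + 1)) : Equiv.Perm (Fin (d + 1)) :=
  (finSuccEquiv' β₀).trans (finSuccEquiv' (Fin.last d)).symm

def εsign (d : ℕ) (β₀ : Fin (d + 1)) : ℝ := ((Equiv.Perm.sign (ρperm d β₀) : ℤˣ) : ℤ)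

lemma εsign_sq (d : ℕ) (β₀ : Fin (d + 1)) : εsign d β₀ * εsign d β₀ = 1 := by
  unfold εsign
  rcases Int.units_eq_one_or (Equiv.Perm.sign (ρperm d β₀)) with h | h <;> rw [h] <;> norm_num

lemma omega_snoc_Y (d k : ℕ) (β₀ : Fin (d + 1)) (V : Phase (d + 1) k) :
    OmegaEval (d + 1) k (Fin.snoc (Yvec d k β₀) V)
      = εsign d β₀ * V.1 (Fin.castAdd k β₀) := by
  unfold OmegaEval
  rw [Finset.sum_eq_single (stdIdx d k)]
  · -- main term
    set w : Fin (d + 2) → Phase (d + 1) k := Fin.snoc (Yvec d k β₀) V with hw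
    set M : Matrix (Fin (d + 2)) (Fin (d + 2)) ℝ := Matrix.of fun a b : Fin (d + 2) =>
      (Fin.cons ((w b).2 (stdIdx d k))
        (fun j : Fin (d + 1) => (w b).1 (midx (stdIdx d k) j)) : Fin (d + 2) → ℝ) a with hM
    have hw0 : w 0 = ((0 : Fin (d + 1 + k) → ℝ), Pi.single (stdIdx d k) (1 : ℝ)) := by
      show w (Fin.castSucc 0) = _
      rw [hw, Fin.snoc_castSucc]
      simp [Yvec]
    have hcol0 : ∀ a : Fin (d + 2), M a 0 = (Pi.single 0 (1:ℝ) : Fin (d+2) → ℝ) a := by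
      intro a
      rw [hM]
      show (Fin.cons ((w 0).2 (stdIdx d k))
        (fun j : Fin (d + 1) => (w 0).1 (midx (stdIdx d k) j)) : Fin (d + 2) → ℝ) a = _
      rw [hw0]
      refine Fin.cases ?_ (fun i => ?_) a
      · simp
      · simp [Pi.single_apply, (Fin.succ_ne_zero i)]
    rw [Matrix.det_succ_column_zero]
    rw [Finset.sum_eq_single 0]
    · rw [hcol0 0]
      simp only [Pi.single_eq_same, Fin.val_zero, pow_zero, one_mul, mul_one]
      set N : Matrix (Fin (d + 1)) (Fin (d + 1)) ℝ := M.submatrix Fin.succ Fin.succ with hN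
      have hNentry : ∀ (j b : Fin (d + 1)), N j b = (w b.succ).1 (Fin.castAdd k j) := by
        intro j b
        rw [hN]
        show (Fin.cons ((w b.succ).2 (stdIdx d k))
          (fun j : Fin (d + 1) => (w b.succ).1 (midx (stdIdx d k) j)) : Fin (d + 2) → ℝ) j.succ = _
        rw [Fin.cons_succ, midx_stdIdx]
      have hρβ : ρperm d β₀ β₀ = Fin.last d := by
        simp [ρperm, finSuccEquiv'_at, finSuccEquiv'_symm_none]
      have hρs : ∀ i : Fin d, ρperm d β₀ (β₀.succAbove i) = Fin.castSucc i := by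
        intro i
        simp [ρperm, finSuccEquiv'_succAbove, finSuccEquiv'_symm_some, Fin.succAbove_last]
      have hsub : N.submatrix id (ρperm d β₀)
          = (1 : Matrix (Fin (d + 1)) (Fin (d + 1)) ℝ).updateCol β₀
              (fun j => V.1 (Fin.castAdd k j)) := by
        ext j c
        refine Fin.succAboveCases β₀ ?_ (fun i => ?_) c
        · rw [Matrix.submatrix_apply, id, hρβ, Matrix.updateCol_self, hNentry]
          have : (Fin.last d).succ = Fin.last (d + 1) := rfl
          rw [this]
          have : w (Fin.last (d + 1)) = V := by rw [hw]; exact Fin.snoc_last _ _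
          rw [this]
        · rw [Matrix.submatrix_apply, id, hρs i,
            Matrix.updateCol_ne (Fin.succAbove_ne β₀ i), hNentry]
          have hsucc : (Fin.castSucc i).succ = Fin.castSucc i.succ := by
            rw [Fin.succ_castSucc]
          rw [hsucc]
          have : w (Fin.castSucc i.succ) = Yvec d k β₀ i.succ := by
            rw [hw]; exact Fin.snoc_castSucc _ _ _
          rw [this]
          show (Pi.single (Fin.castAdd k (β₀.succAbove i)) (1 : ℝ) : Fin (d+1+k) → ℝ)
              (Fin.castAdd k j) = _
          rw [Pi.single_apply, Matrix.one_apply]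
          by_cases h : j = β₀.succAbove i
          · rw [if_pos (by rw [h]), if_pos h]
          · rw [if_neg (fun hh => h (Fin.ext (by simpa using congrArg Fin.val hh))), if_neg h]
      have hdet1 : (N.submatrix id (ρperm d β₀)).det = V.1 (Fin.castAdd k β₀) := by
        rw [hsub, ← Matrix.cramer_apply, Matrix.cramer_one]
        rfl
      have hdet2 := Matrix.det_permute' (ρperm d β₀) N
      rw [hdet1] at hdet2
      have : N.det = εsign d β₀ * V.1 (Fin.castAdd k β₀) := by
        rw [hdet2, ← mul_assoc]
        rw [show ((Equiv.Perm.sign (ρperm d β₀) : ℤˣ) : ℝ) = εsign d β₀ from by unfold εsign; rfl]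
        rw [εsign_sq, one_mul]
      exact this
    · intro i _ hi
      rw [hcol0 i, Pi.single_eq_of_ne hi]
      ring
    · intro h
      exact absurd (Finset.mem_univ _) h
  · intro s _ hs
    refine Matrix.det_eq_zero_of_column_eq_zero 0 fun a => ?_
    have hw0 : (Fin.snoc (Yvec d k β₀) V : Fin (d+2) → Phase (d+1) k) 0
        = ((0 : Fin (d + 1 + k) → ℝ), Pi.single (stdIdx d k) (1 : ℝ)) := by
      show (Fin.snoc (Yvec d k β₀) V : Fin (d+2) → Phase (d+1) k) (Fin.castSucc 0) = _
      rw [Fin.snoc_castSucc]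
      simp [Yvec]
    show (Fin.cons (((Fin.snoc (Yvec d k β₀) V : Fin (d+2) → Phase (d+1) k) 0).2 s)
      (fun j : Fin (d + 1) =>
        ((Fin.snoc (Yvec d k β₀) V : Fin (d+2) → Phase (d+1) k) 0).1 (midx s j))
        : Fin (d + 2) → ℝ) a = 0
    rw [hw0]
    refine Fin.cases ?_ (fun i => ?_) a
    · simpa using Pi.single_eq_of_ne hs 1
    · simp
  · intro h
    exact absurd (Finset.mem_univ _) h

lemma sum_single_mul (d : ℕ) (β₀ : Fin (d + 1)) (s : ℝ) (g : Fin (d + 1) → ℝ) :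
    ∑ β : Fin (d + 1), (Pi.single β₀ s : Fin (d + 1) → ℝ) β * g β = s * g β₀ := by
  rw [Finset.sum_eq_single β₀]
  · rw [Pi.single_eq_same]
  · intro b _ hb
    rw [Pi.single_eq_of_ne hb, zero_mul]
  · intro h
    exact absurd (Finset.mem_univ _) h

/-- The zero field is Hamiltonian for `H' = 0`, with `c = 0`. -/
lemma ham_zero_spec (d k : ℕ) (m : Phase (d + 1) k) (V : Phase (d + 1) k) :
    (-1 : ℝ) ^ (d + 1) * ∑ j : Fin 1,
        OmegaEval (d + 1) k (Fin.snoc ((fun _ _ _ => 0 : NVecField d k 1) m j) V)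
      = fderiv ℝ (fun _ => (0:ℝ)) m V
        + ∑ β : Fin (d + 1), (0 : Fin (d+1) → ℝ) β * V.1 (Fin.castAdd k β) := by
  have h0 : OmegaEval (d + 1) k
      (Fin.snoc (fun _ : Fin (d+1) => (0 : Phase (d + 1) k)) V) = 0 :=
    omega_zero_arg (d+1) k _ (Fin.castSucc 0) (Fin.snoc_castSucc _ _ _)
  simp [h0]

/-- The field `Yvec` is Hamiltonian for `H' = 0`, with `c = single β₀ ((-1)^(d+1) ε)`. -/
lemma ham_Y_spec (d k : ℕ) (β₀ : Fin (d + 1)) (m : Phase (d + 1) k) (V : Phase (d + 1) k) :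
    (-1 : ℝ) ^ (d + 1) * ∑ j : Fin 1,
        OmegaEval (d + 1) k (Fin.snoc ((fun _ _ => Yvec d k β₀ : NVecField d k 1) m j) V)
      = fderiv ℝ (fun _ => (0:ℝ)) m V
        + ∑ β : Fin (d + 1),
            (Pi.single β₀ ((-1 : ℝ) ^ (d+1) * εsign d β₀) : Fin (d+1) → ℝ) β
              * V.1 (Fin.castAdd k β) := by
  rw [sum_single_mul]
  simp only [Finset.sum_const, Finset.card_univ, Fintype.card_fin, one_smul]
  rw [omega_snoc_Y]
  simp [mul_assoc]

/-- (i) A form `a ∈ 𝔓^{n−1}M` is admissible iff `dx^β(Ξ(a)) = 0` for all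
`β = 1,…,n`.  (ii) For admissible `a ∈ 𝔓^{n−1}M` the external 𝔭-bracket
`{Hω, a} = −Ξ(a)⨼d(Hω)` and the ω-bracket `{Hω, a}_ω = X♯a` (any `H`-Hamiltonian `X`)
coincide, both being equal to `−(Ξ(a) ⨼ dH) ω`.  Here `n = d+1 ≥ 1` and `H` is a smooth
Hamiltonian with `∂H/∂p_{1…n} = 1` (coming from a Legendre correspondence). -/
theorem stmt15 (d k : ℕ)
    (a : Phase (d + 1) k → AlternatingMap ℝ (Phase (d + 1) k) ℝ (Fin d))
    (ha : ∀ v : Fin d → Phase (d + 1) k, ContDiff ℝ (⊤ : ℕ∞) fun m => a m v)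
    (ξa : Phase (d + 1) k → Phase (d + 1) k) (hξa : ContDiff ℝ (⊤ : ℕ∞) ξa)
    (hdefa : ∀ (m : Phase (d + 1) k) (w : Fin (d + 1) → Phase (d + 1) k),
      dEval (fun m' v => a m' v) m w = - OmegaEval (d + 1) k (Fin.cons (ξa m) w))
    (H : Phase (d + 1) k → ℝ) (hH : ContDiff ℝ (⊤ : ℕ∞) H)
    (hHone : ∀ m : Phase (d + 1) k,
      fderiv ℝ H m
        ((0 : Fin (d + 1 + k) → ℝ),
          (Pi.single ⟨(Finset.univ : Finset (Fin (d + 1))).map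
              ⟨Fin.castAdd k, fun x y hxy => Fin.ext (by simpa using congrArg Fin.val hxy)⟩,
            by simp⟩ 1 : MultiIdx (d + 1 + k) (d + 1) → ℝ)) = 1) :
    -- (i)
    (Admissible d k a ↔ ∀ (m : Phase (d + 1) k) (β : Fin (d + 1)),
      (ξa m).1 (Fin.castAdd k β) = 0) ∧
    -- (ii)
    (Admissible d k a →
      ∀ (m : Phase (d + 1) k) (v : Fin (d + 1) → Phase (d + 1) k),
        (- dEval (fun m' (w : Fin (d + 1) → Phase (d + 1) k) =>
              H m' * volEval (d + 1) k w) m (Fin.cons (ξa m) v)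
          = - fderiv ℝ H m (ξa m) * volEval (d + 1) k v) ∧
        (∀ (r : ℕ) (X : NVecField d k r), IsHamiltonian d k r H X →
          sharp d k r X a m v = - fderiv ℝ H m (ξa m) * volEval (d + 1) k v)) := by
  -- forward direction of (i)
  have fwd : Admissible d k a → ∀ (m : Phase (d + 1) k) (β : Fin (d + 1)),
      (ξa m).1 (Fin.castAdd k β) = 0 := by
    intro hAdm m β₀
    have hham0 : IsHamiltonian d k 1 (fun _ => 0) (fun _ _ _ => 0) :=
      fun m' => ⟨0, ham_zero_spec d k m'⟩
    have hhamY : IsHamiltonian d k 1 (fun _ => 0) (fun _ _ => Yvec d k β₀) :=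
      fun m' => ⟨Pi.single β₀ ((-1 : ℝ) ^ (d+1) * εsign d β₀), ham_Y_spec d k β₀ m'⟩
    have h := hAdm (fun _ => 0) contDiff_const 1 1 (fun _ _ _ => 0) (fun _ _ => Yvec d k β₀)
      hham0 hhamY m (stdFrame d k)
    rw [sharp_eq d k 1 a ξa hdefa (fun _ => 0) (fun _ _ _ => 0) m 0
        (ham_zero_spec d k m) (stdFrame d k),
      sharp_eq d k 1 a ξa hdefa (fun _ => 0) (fun _ _ => Yvec d k β₀) m
        (Pi.single β₀ ((-1 : ℝ) ^ (d+1) * εsign d β₀)) (ham_Y_spec d k β₀ m)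
        (stdFrame d k), vol_stdFrame, sum_single_mul] at h
    simp only [fderiv_const, Pi.zero_apply, ContinuousLinearMap.zero_apply, zero_add,
      mul_one, Finset.sum_const_zero] at h
    simp only [Pi.zero_apply, zero_mul, Finset.sum_const_zero, neg_zero] at h
    have h' : (-1 : ℝ) ^ (d+1) * εsign d β₀ * (ξa m).1 (Fin.castAdd k β₀) = 0 := by
      linarith [h.symm]
    have hne : (-1 : ℝ) ^ (d+1) * εsign d β₀ ≠ 0 := by
      intro hc
      have := εsign_sq d β₀
      rcases mul_eq_zero.mp hc with hc | hc
      · exact (pow_ne_zero (d+1) (by norm_num : (-1:ℝ) ≠ 0)) hc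
      · rw [hc, mul_zero] at this; norm_num at this
    exact (mul_eq_zero.mp h').resolve_left hne
  -- backward direction of (i)
  have bwd : (∀ (m : Phase (d + 1) k) (β : Fin (d + 1)),
      (ξa m).1 (Fin.castAdd k β) = 0) → Admissible d k a := by
    intro hz H' hH' r r' X X' hX hX' m v
    obtain ⟨c, hc⟩ := hX m
    obtain ⟨c', hc'⟩ := hX' m
    rw [sharp_eq d k r a ξa hdefa H' X m c hc v,
      sharp_eq d k r' a ξa hdefa H' X' m c' hc' v]
    have hzero : ∀ c'' : Fin (d + 1) → ℝ,
        ∑ β : Fin (d + 1), c'' β * (ξa m).1 (Fin.castAdd k β) = 0 := fun c'' =>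
      Finset.sum_eq_zero fun β _ => by rw [hz m β, mul_zero]
    rw [hzero c, hzero c']
  refine ⟨⟨fwd, bwd⟩, ?_⟩
  intro hAdm m v
  have hz := fwd hAdm
  constructor
  · -- (ii), first equation: −ξ ⨼ d(Hω) = −dH(ξ) ω
    unfold dEval
    have hterm : ∀ i : Fin (d + 2),
        fderiv ℝ (fun m' => H m' *
            volEval (d + 1) k ((Fin.cons (ξa m) v : Fin (d+2) → Phase (d+1) k) ∘ i.succAbove)) m
          ((Fin.cons (ξa m) v : Fin (d+2) → Phase (d+1) k) i)
        = volEval (d + 1) k ((Fin.cons (ξa m) v : Fin (d+2) → Phase (d+1) k) ∘ i.succAbove)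
            * fderiv ℝ H m ((Fin.cons (ξa m) v : Fin (d+2) → Phase (d+1) k) i) := by
      intro i
      rw [fderiv_mul_const (hH.differentiable (by simp) m)]
      rw [ContinuousLinearMap.smul_apply, smul_eq_mul]
    rw [Finset.sum_congr rfl fun i _ => by rw [hterm i]]
    rw [Finset.sum_eq_single 0]
    · have h1 : ((Fin.cons (ξa m) v : Fin (d+2) → Phase (d+1) k) ∘ (0 : Fin (d+2)).succAbove) = v := by
        funext b
        rw [Function.comp_apply, Fin.succAbove_zero, Fin.cons_succ]
      have h2 : (Fin.cons (ξa m) v : Fin (d+2) → Phase (d+1) k) 0 = ξa m := Fin.cons_zero _ _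
      rw [h1, h2]
      simp [Fin.val_zero]
      ring
    · intro i _ hi
      have h0 : i.succAbove 0 = 0 := by
        have : Fin.castSucc (0 : Fin (d+1)) < i := by
          rw [Fin.castSucc_zero]
          exact Fin.pos_of_ne_zero hi
        rw [Fin.succAbove_of_castSucc_lt i 0 this, Fin.castSucc_zero]
      have hvol : volEval (d + 1) k
          ((Fin.cons (ξa m) v : Fin (d+2) → Phase (d+1) k) ∘ i.succAbove) = 0 := by
        unfold volEval
        refine Matrix.det_eq_zero_of_column_eq_zero 0 fun a => ?_
        show ((Fin.cons (ξa m) v : Fin (d+2) → Phase (d+1) k) (i.succAbove 0)).1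
          (Fin.castAdd k a) = 0
        rw [h0]
        show (ξa m).1 (Fin.castAdd k a) = 0
        exact hz m a
      rw [hvol]
      simp
    · intro h
      exact absurd (Finset.mem_univ _) h
  · -- (ii), second equation: X ♯ a = −dH(ξ) ω
    intro r X hX
    obtain ⟨c, hc⟩ := hX m
    rw [sharp_eq d k r a ξa hdefa H X m c hc v]
    have hzero : ∑ β : Fin (d + 1), c β * (ξa m).1 (Fin.castAdd k β) = 0 :=
      Finset.sum_eq_zero fun β _ => by rw [hz m β, mul_zero]
    rw [hzero, add_zero, neg_mul]
end
end

section
/- Restriction of the Legendre correspondence to the Weyl submanifold is a bijection onto S Λⁿ T(X×Y) × ℝ: for every (q, v, w) ∈ ℝ^{n+k} × (ℝᵏ)ⁿ × ℝ there exists (q, p) ∈ M with (q,v,w) ↔ (q,p), and this (q,p) is unique if required to lie in the Weyl submanifold M_Weyl (all components p_{μ₁…μₙ} vanish except ε := p_{1…n} and p^α_i := p_{1…(α−1)(n+i)(α+1)…n} up to permutations). Explicitly, the unique Weyl solution is given by p^α_i = (∂L/∂v^i_α)(q,v) and ε = w + L(q,v) − Σ_α Σ_i (∂L/∂v^i_α)(q,v)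 · v^i_α. -/
open scoped BigOperators

noncomputable section

/-- The column vectors `z_β = ∂/∂x^β + Σ_i v^i_β ∂/∂y^i ∈ ℝ^{n+k}`. -/
def zcol (n k : ℕ) (v : Fin k → Fin n → ℝ) : Fin n → (Fin (n + k) → ℝ) :=
  fun β => Fin.append (Pi.single β 1) (fun i => v i β)

/-- `⟨p, z₁ ∧ … ∧ zₙ⟩ = Σ_{μ₁<…<μₙ} p_{μ₁…μₙ} det (z^{μ_a}_b)` for arbitrary columns `z`. -/
def pairing (n k : ℕ) (p : MultiIdx (n + k) n → ℝ) (z : Fin n → (Fin (n + k) → ℝ)) : ℝ :=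
  ∑ s : MultiIdx (n + k) n, p s * Matrix.det (Matrix.of fun a b : Fin n => z b (midx s a))

/-- `W(q,v,p) = ⟨p,v⟩ − L(q,v)`. -/
def Wfun (n k : ℕ) (L : (Fin (n + k) → ℝ) → (Fin k → Fin n → ℝ) → ℝ)
    (q : Fin (n + k) → ℝ) (v : Fin k → Fin n → ℝ) (p : MultiIdx (n + k) n → ℝ) : ℝ :=
  pairing n k p (zcol n k v) - L q v


/-- `∂L/∂v^i_α (q,v)`. -/
def dLdv {n k : ℕ} (L : (Fin (n + k) → ℝ) → (Fin k → Fin n → ℝ) → ℝ)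
    (q : Fin (n + k) → ℝ) (v : Fin k → Fin n → ℝ) (i : Fin k) (α : Fin n) : ℝ :=
  fderiv ℝ (fun v' => L q v') v (Pi.single i (Pi.single α 1))

/-- The multi-index `(1,…,n)`, i.e. the set of all spacetime indices; `ε := p_{1…n}`. -/
def sZero (n k : ℕ) : MultiIdx (n + k) n :=
  ⟨(Finset.univ : Finset (Fin n)).map
      ⟨Fin.castAdd k, fun a b h => Fin.ext (by simpa using congrArg Fin.val h)⟩,
    by simp⟩

/-- The multi-index `{1,…,α−1, n+i, α+1,…,n}` (as a set), whose coordinate carries the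
momentum `p^α_i` (up to the sign of the permutation reordering
`(1,…,α−1, n+i, α+1,…,n)` increasingly). -/
def sIdx {n k : ℕ} (α : Fin n) (i : Fin k) : MultiIdx (n + k) n :=
  ⟨insert (Fin.natAdd n i) ((sZero n k).1.erase (Fin.castAdd k α)), by
    have hmem : Fin.castAdd k α ∈ (sZero n k).1 := by
      simp [sZero]
      exact ⟨α, rfl⟩
    have hnot : Fin.natAdd n i ∉ (sZero n k).1.erase (Fin.castAdd k α) := by
      intro hmem'
      have := Finset.mem_of_mem_erase hmem'
      simp only [sZero, Finset.mem_map, Function.Embedding.coeFn_mk] at this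
      obtain ⟨b, -, hb⟩ := this
      have := congrArg Fin.val hb
      simp [Fin.natAdd, Fin.castAdd, Fin.castLE] at this
      omega
    rw [Finset.card_insert_of_notMem hnot, Finset.card_erase_of_mem hmem, (sZero n k).2]
    have : 0 < n := α.pos
    omega⟩

/-- Membership in the Weyl submanifold `M_Weyl`: all components of `p` vanish except
`ε = p_{1…n}` and the `p^α_i` (up to permutations of the indices). -/
def IsWeyl (n k : ℕ) (p : MultiIdx (n + k) n → ℝ) : Prop :=
  ∀ s : MultiIdx (n + k) n, s ≠ sZero n k → (∀ (α : Fin n) (i : Fin k), s ≠ sIdx α i) →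
    p s = 0

/-- The Legendre correspondence `(q,v,w) ↔ (q,p)`:  `W(q,v,p) = w` and
`∂W/∂v^i_α (q,v,p) = 0` for all `i, α`. -/
def Corresponds (n k : ℕ) (L : (Fin (n + k) → ℝ) → (Fin k → Fin n → ℝ) → ℝ)
    (q : Fin (n + k) → ℝ) (v : Fin k → Fin n → ℝ) (w : ℝ)
    (p : MultiIdx (n + k) n → ℝ) : Prop :=
  Wfun n k L q v p = w ∧
  ∀ (i : Fin k) (α : Fin n),
    fderiv ℝ (fun v' => Wfun n k L q v' p) v (Pi.single i (Pi.single α 1)) = 0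


section Aux

lemma mem_sZero {n k : ℕ} {x : Fin (n + k)} : x ∈ (sZero n k).1 ↔ (x : ℕ) < n := by
  simp only [sZero, Finset.mem_map, Finset.mem_univ, true_and, Function.Embedding.coeFn_mk]
  constructor
  · rintro ⟨b, rfl⟩; exact b.2
  · intro h; exact ⟨⟨x, h⟩, Fin.ext rfl⟩

lemma mem_sIdx {n k : ℕ} {α : Fin n} {i : Fin k} {x : Fin (n + k)} :
    x ∈ (sIdx α i).1 ↔ (x : ℕ) = n + i ∨ ((x : ℕ) < n ∧ (x : ℕ) ≠ (α : ℕ)) := by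
  simp only [sIdx, Finset.mem_insert, Finset.mem_erase]
  constructor
  · rintro (rfl | ⟨hne, hmem⟩)
    · exact Or.inl rfl
    · refine Or.inr ⟨mem_sZero.1 hmem, fun h => hne (Fin.ext h)⟩
  · rintro (h | ⟨h1, h2⟩)
    · exact Or.inl (Fin.ext h)
    · exact Or.inr ⟨fun h => h2 (by rw [h]; rfl), mem_sZero.2 h1⟩

lemma sIdx_ne_sZero {n k : ℕ} (α : Fin n) (i : Fin k) : sIdx α i ≠ sZero n k := by
  intro h
  have hx : (Fin.natAdd n i) ∈ (sIdx α i).1 := mem_sIdx.2 (Or.inl rfl)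
  rw [h] at hx
  have := mem_sZero.1 hx
  simp only [Fin.natAdd] at this
  omega

lemma sIdx_inj {n k : ℕ} {α α' : Fin n} {i i' : Fin k}
    (h : sIdx α i = sIdx α' i') : α = α' ∧ i = i' := by
  have hsets : (sIdx α i).1 = (sIdx α' i').1 := by rw [h]
  have hi : (Fin.natAdd n i : Fin (n+k)) ∈ (sIdx α' i').1 := by
    rw [← hsets]; exact mem_sIdx.2 (Or.inl rfl)
  have hii : i = i' := by
    rcases mem_sIdx.1 hi with h1 | h2
    · simp only [Fin.natAdd] at h1; exact Fin.ext (by omega)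
    · simp only [Fin.natAdd] at h2; omega
  have hα : (Fin.castAdd k α' : Fin (n+k)) ∉ (sIdx α' i').1 := by
    intro hmem
    rcases mem_sIdx.1 hmem with h1 | h2
    · simp only [Fin.castAdd, Fin.castLE] at h1; omega
    · simp only [Fin.castAdd, Fin.castLE] at h2; omega
  have hαα : α = α' := by
    by_contra hne
    apply hα
    rw [← hsets]
    refine mem_sIdx.2 (Or.inr ⟨α'.2, fun hc => hne (Fin.ext hc.symm)⟩)
  exact ⟨hαα, hii⟩

lemma midx_sZero {n k : ℕ} (a : Fin n) : midx (sZero n k) a = Fin.castAdd k a := by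
  have := Finset.orderEmbOfFin_unique (f := fun a : Fin n => Fin.castAdd k a)
    (sZero n k).2 (fun x => mem_sZero.2 x.2)
    (fun a b hab => by simp only [Fin.lt_def, Fin.coe_castAdd]; exact hab)
  unfold midx
  rw [Finset.coe_orderIsoOfFin_apply, ← this]

/-- The increasing enumeration of `sIdx α i` (with `n = m+1`). -/
def fS (m k : ℕ) (α : Fin (m+1)) (i : Fin k) (a : Fin (m+1)) : Fin (m + 1 + k) :=
  ⟨if (a : ℕ) < (α : ℕ) then a else if (a : ℕ) < m then a + 1 else m + 1 + i,
   by split_ifs <;> omega⟩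

lemma midx_sIdx {m k : ℕ} (α : Fin (m+1)) (i : Fin k) (a : Fin (m+1)) :
    midx (sIdx α i) a = fS m k α i a := by
  have := Finset.orderEmbOfFin_unique (f := fS m k α i)
    (sIdx α i).2
    (fun a => by
      refine mem_sIdx.2 ?_
      simp only [fS]
      have hα := α.2
      have ha := a.2
      split_ifs with h1 h2
      · exact Or.inr ⟨by omega, by omega⟩
      · by_cases hc : (a : ℕ) + 1 = (α : ℕ)
        · exact Or.inr ⟨by omega, by omega⟩
        · exact Or.inr ⟨by omega, by omega⟩
      · exact Or.inl (by omega))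
    (fun a b hab => by
      simp only [fS, Fin.lt_def] at hab ⊢
      have hα := α.2
      split_ifs at hab ⊢ <;> omega)
  unfold midx
  rw [Finset.coe_orderIsoOfFin_apply, ← this]

end Aux

section Det

lemma det_sZero {n k : ℕ} (v : Fin k → Fin n → ℝ) :
    Matrix.det (Matrix.of fun a b : Fin n => zcol n k v b (midx (sZero n k) a)) = 1 := by
  have h : (Matrix.of fun a b : Fin n => zcol n k v b (midx (sZero n k) a)) = 1 := by
    ext a b
    simp only [Matrix.of_apply, midx_sZero, zcol, Fin.append_left, Matrix.one_apply,
      Pi.single_apply]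
  rw [h, Matrix.det_one]

lemma det_sIdx {m k : ℕ} (α : Fin (m+1)) (i : Fin k) (v : Fin k → Fin (m+1) → ℝ) :
    Matrix.det (Matrix.of fun a b : Fin (m+1) => zcol (m+1) k v b (midx (sIdx α i) a)) =
      (-1 : ℝ) ^ (m + (α : ℕ)) * v i α := by
  have hα := α.2
  have hM : (Matrix.of fun a b : Fin (m+1) => zcol (m+1) k v b (midx (sIdx α i) a)) =
      Matrix.of fun a b : Fin (m+1) =>
        if h : (a : ℕ) < m then (if α.succAbove ⟨a, h⟩ = b then (1:ℝ) else 0) else v i b := by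
    ext a b
    simp only [Matrix.of_apply, midx_sIdx]
    by_cases h : (a : ℕ) < m
    · have hfs : fS m k α i a = Fin.castAdd k (α.succAbove ⟨a, h⟩) := by
        apply Fin.ext
        by_cases h2 : (a : ℕ) < (α : ℕ)
        · rw [Fin.succAbove_of_castSucc_lt α ⟨a, h⟩ (by rw [Fin.lt_def]; exact h2)]
          simp only [fS, Fin.coe_castAdd, Fin.coe_castSucc]
          rw [if_pos h2]
        · rw [Fin.succAbove_of_le_castSucc α ⟨a, h⟩ (by rw [Fin.le_def]; simpa using h2)]
          simp only [fS, Fin.coe_castAdd, Fin.val_succ]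
          rw [if_neg h2, if_pos h]
      rw [hfs, dif_pos h]
      simp only [zcol, Fin.append_left, Pi.single_apply]
    · have hfs : fS m k α i a = Fin.natAdd (m+1) i := by
        apply Fin.ext
        simp only [fS, Fin.natAdd]
        rw [if_neg (by omega), if_neg h]
      rw [hfs, dif_neg h]
      simp only [zcol, Fin.append_right]
  rw [hM, Matrix.det_succ_row _ (Fin.last m)]
  have hrow : ∀ b : Fin (m+1),
      (Matrix.of fun a b : Fin (m+1) =>
        if h : (a : ℕ) < m then (if α.succAbove ⟨a, h⟩ = b then (1:ℝ) else 0) else v i b)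
        (Fin.last m) b = v i b := by
    intro b
    simp only [Matrix.of_apply, Fin.val_last]
    rw [dif_neg (lt_irrefl m)]
  have hminor : ∀ b : Fin (m+1),
      ((Matrix.of fun a b : Fin (m+1) =>
        if h : (a : ℕ) < m then (if α.succAbove ⟨a, h⟩ = b then (1:ℝ) else 0) else v i b).submatrix
          (Fin.last m).succAbove b.succAbove).det = if b = α then 1 else 0 := by
    intro b
    by_cases hb : b = α
    · rw [if_pos hb]
      subst hb
      have h1 : (Matrix.of fun a c : Fin (m+1) =>
          if h : (a : ℕ) < m then (if b.succAbove ⟨a, h⟩ = c then (1:ℝ) else 0) else v i c).submatrix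
            (Fin.last m).succAbove b.succAbove = 1 := by
        ext a c
        simp only [Matrix.submatrix_apply, Matrix.of_apply, Fin.succAbove_last, Matrix.one_apply]
        have ha : ((Fin.castSucc a : Fin (m+1)) : ℕ) < m := a.2
        rw [dif_pos ha]
        have h2 : (⟨((Fin.castSucc a : Fin (m+1)) : ℕ), ha⟩ : Fin m) = a := rfl
        rw [h2]
        by_cases he : a = c
        · rw [he]; simp
        · rw [if_neg (fun hc => he (Fin.succAbove_right_injective hc)), if_neg he]
      rw [h1, Matrix.det_one]
    · rw [if_neg hb]
      obtain ⟨c₀, hc₀⟩ := Fin.exists_succAbove_eq (Ne.symm hb : α ≠ b)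
      apply Matrix.det_eq_zero_of_column_eq_zero c₀
      intro a
      simp only [Matrix.submatrix_apply, Matrix.of_apply, Fin.succAbove_last]
      have ha : ((Fin.castSucc a : Fin (m+1)) : ℕ) < m := a.2
      rw [dif_pos ha, hc₀]
      exact if_neg (Fin.succAbove_ne α _)
  calc (∑ b : Fin (m+1), (-1:ℝ) ^ ((Fin.last m : ℕ) + (b:ℕ)) *
          (Matrix.of fun a b : Fin (m+1) =>
            if h : (a : ℕ) < m then (if α.succAbove ⟨a, h⟩ = b then (1:ℝ) else 0) else v i b)
            (Fin.last m) b *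
          ((Matrix.of fun a b : Fin (m+1) =>
            if h : (a : ℕ) < m then (if α.succAbove ⟨a, h⟩ = b then (1:ℝ) else 0) else v i b).submatrix
              (Fin.last m).succAbove b.succAbove).det)
      = ∑ b : Fin (m+1), (-1:ℝ) ^ (m + (b:ℕ)) * v i b * (if b = α then 1 else 0) := by
        refine Finset.sum_congr rfl fun b _ => ?_
        rw [hrow b, hminor b, Fin.val_last]
    _ = (-1 : ℝ) ^ (m + (α : ℕ)) * v i α := by
        rw [Finset.sum_eq_single α]
        · rw [if_pos rfl, mul_one]
        · intro b _ hb; rw [if_neg hb, mul_zero]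
        · intro hc; exact absurd (Finset.mem_univ α) hc

end Det

section Pairing

lemma pairing_weyl {m k : ℕ} (p : MultiIdx (m+1+k) (m+1) → ℝ) (hp : IsWeyl (m+1) k p)
    (v : Fin k → Fin (m+1) → ℝ) :
    pairing (m+1) k p (zcol (m+1) k v) =
      p (sZero (m+1) k) + ∑ α : Fin (m+1), ∑ i : Fin k,
        p (sIdx α i) * ((-1:ℝ) ^ (m + (α:ℕ)) * v i α) := by
  unfold pairing
  have hterm : ∀ s : MultiIdx (m+1+k) (m+1),
      p s * Matrix.det (Matrix.of fun a b : Fin (m+1) => zcol (m+1) k v b (midx s a)) =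
      (if s = sZero (m+1) k then p s else 0) +
        ∑ α : Fin (m+1), ∑ i : Fin k,
          (if s = sIdx α i then p s * ((-1:ℝ) ^ (m + (α:ℕ)) * v i α) else 0) := by
    intro s
    by_cases hs0 : s = sZero (m+1) k
    · subst hs0
      rw [det_sZero, if_pos rfl, mul_one]
      have : ∀ α : Fin (m+1), ∀ i : Fin k,
          (if sZero (m+1) k = sIdx α i then
            p (sZero (m+1) k) * ((-1:ℝ) ^ (m + (α:ℕ)) * v i α) else 0) = 0 :=
        fun α i => if_neg (fun h => sIdx_ne_sZero α i h.symm)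
      rw [Finset.sum_eq_zero fun α _ => Finset.sum_eq_zero fun i _ => this α i, add_zero]
    · by_cases hsi : ∃ (α : Fin (m+1)) (i : Fin k), s = sIdx α i
      · obtain ⟨α, i, rfl⟩ := hsi
        rw [det_sIdx, if_neg hs0, zero_add]
        rw [Finset.sum_eq_single α]
        · rw [Finset.sum_eq_single i]
          · rw [if_pos rfl]
          · intro i' _ hi'
            exact if_neg (fun h => hi' ((sIdx_inj h).2.symm))
          · intro hc; exact absurd (Finset.mem_univ i) hc
        · intro α' _ hα'
          apply Finset.sum_eq_zero
          intro i' _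
          exact if_neg (fun h => hα' ((sIdx_inj h).1.symm))
        · intro hc; exact absurd (Finset.mem_univ α) hc
      · have hz : p s = 0 := hp s hs0 (fun α i h => hsi ⟨α, i, h⟩)
        rw [hz, zero_mul, if_neg hs0, zero_add]
        symm
        apply Finset.sum_eq_zero
        intro α _
        apply Finset.sum_eq_zero
        intro i _
        exact if_neg (fun h => hsi ⟨α, i, h⟩)
  rw [Finset.sum_congr rfl fun s _ => hterm s, Finset.sum_add_distrib]
  congr 1
  · rw [Finset.sum_ite_eq' Finset.univ (sZero (m+1) k) p, if_pos (Finset.mem_univ _)]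
  · rw [Finset.sum_comm]
    refine Finset.sum_congr rfl fun α _ => ?_
    rw [Finset.sum_comm]
    refine Finset.sum_congr rfl fun i _ => ?_
    rw [Finset.sum_ite_eq' Finset.univ (sIdx α i)
      (fun s => p s * ((-1:ℝ) ^ (m + (α:ℕ)) * v i α)), if_pos (Finset.mem_univ _)]

lemma Wfun_weyl {m k : ℕ} (L : (Fin (m+1+k) → ℝ) → (Fin k → Fin (m+1) → ℝ) → ℝ)
    (q : Fin (m+1+k) → ℝ) (v : Fin k → Fin (m+1) → ℝ)
    (p : MultiIdx (m+1+k) (m+1) → ℝ) (hp : IsWeyl (m+1) k p) :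
    Wfun (m+1) k L q v p =
      p (sZero (m+1) k) + (∑ α : Fin (m+1), ∑ i : Fin k,
        p (sIdx α i) * ((-1:ℝ) ^ (m + (α:ℕ)) * v i α)) - L q v := by
  unfold Wfun
  rw [pairing_weyl p hp v]

end Pairing

section Deriv

/-- Evaluation `v' ↦ v' i α` as a continuous linear map. -/
def evalCLM (m k : ℕ) (i : Fin k) (α : Fin (m+1)) :
    (Fin k → Fin (m+1) → ℝ) →L[ℝ] ℝ :=
  (ContinuousLinearMap.proj (R := ℝ) (φ := fun _ : Fin (m+1) => ℝ) α).comp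
    (ContinuousLinearMap.proj (R := ℝ) (φ := fun _ : Fin k => Fin (m+1) → ℝ) i)

lemma fderiv_Wfun {m k : ℕ} (L : (Fin (m+1+k) → ℝ) → (Fin k → Fin (m+1) → ℝ) → ℝ)
    (hL : ContDiff ℝ (⊤ : ℕ∞) fun qv : (Fin (m+1+k) → ℝ) × (Fin k → Fin (m+1) → ℝ) => L qv.1 qv.2)
    (q : Fin (m+1+k) → ℝ) (v : Fin k → Fin (m+1) → ℝ)
    (p : MultiIdx (m+1+k) (m+1) → ℝ) (hp : IsWeyl (m+1) k p)
    (i₀ : Fin k) (α₀ : Fin (m+1)) :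
    fderiv ℝ (fun v' => Wfun (m+1) k L q v' p) v (Pi.single i₀ (Pi.single α₀ 1)) =
      p (sIdx α₀ i₀) * (-1:ℝ) ^ (m + (α₀:ℕ)) - dLdv L q v i₀ α₀ := by
  have hfun : (fun v' => Wfun (m+1) k L q v' p) =
      fun v' => (p (sZero (m+1) k) + ∑ α : Fin (m+1), ∑ i : Fin k,
        p (sIdx α i) * ((-1:ℝ) ^ (m + (α:ℕ)) * v' i α)) - L q v' :=
    funext fun v' => by rw [Wfun_weyl L q v' p hp]
  have hLq : ContDiff ℝ (⊤ : ℕ∞) (fun v' : Fin k → Fin (m+1) → ℝ => L q v') :=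
    hL.comp (contDiff_const.prodMk contDiff_id)
  have hproj : ∀ (i : Fin k) (α : Fin (m+1)),
      HasFDerivAt (fun v' : Fin k → Fin (m+1) → ℝ => v' i α) (evalCLM m k i α) v :=
    fun i α => by exact (evalCLM m k i α).hasFDerivAt
  have hsum : HasFDerivAt
      (fun v' : Fin k → Fin (m+1) → ℝ => ∑ α : Fin (m+1), ∑ i : Fin k,
        p (sIdx α i) * ((-1:ℝ) ^ (m + (α:ℕ)) * v' i α))
      (∑ α : Fin (m+1), ∑ i : Fin k,
        (p (sIdx α i) * (-1:ℝ) ^ (m + (α:ℕ))) • evalCLM m k i α) v := by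
    apply HasFDerivAt.fun_sum
    intro α _
    apply HasFDerivAt.fun_sum
    intro i _
    have heq : (fun v' : Fin k → Fin (m+1) → ℝ =>
        p (sIdx α i) * ((-1:ℝ) ^ (m + (α:ℕ)) * v' i α)) =
        fun v' => (p (sIdx α i) * (-1:ℝ) ^ (m + (α:ℕ))) * v' i α :=
      funext fun v' => by ring
    rw [heq]
    exact (hproj i α).const_mul _
  have h1 : HasFDerivAt
      (fun v' : Fin k → Fin (m+1) → ℝ => (p (sZero (m+1) k) + ∑ α : Fin (m+1), ∑ i : Fin k,
        p (sIdx α i) * ((-1:ℝ) ^ (m + (α:ℕ)) * v' i α)) - L q v')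
      ((∑ α : Fin (m+1), ∑ i : Fin k,
        (p (sIdx α i) * (-1:ℝ) ^ (m + (α:ℕ))) • evalCLM m k i α) -
        fderiv ℝ (fun v' => L q v') v) v := by
    exact (hsum.const_add _).sub ((hLq.differentiable (by simp)) v).hasFDerivAt
  rw [hfun, h1.fderiv]
  simp only [ContinuousLinearMap.coe_sub', Pi.sub_apply, ContinuousLinearMap.sum_apply,
    ContinuousLinearMap.smul_apply, smul_eq_mul]
  have heval : ∀ (i : Fin k) (α : Fin (m+1)),
      evalCLM m k i α (Pi.single i₀ (Pi.single α₀ 1)) =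
        if i = i₀ then (if α = α₀ then (1:ℝ) else 0) else 0 := by
    intro i α
    show (Pi.single (M := fun _ : Fin k => Fin (m+1) → ℝ) i₀
      (Pi.single (M := fun _ : Fin (m+1) => ℝ) α₀ (1:ℝ)) i) α = _
    rw [Pi.single_apply]
    by_cases hi : i = i₀
    · rw [if_pos hi, if_pos hi, Pi.single_apply]
    · rw [if_neg hi, if_neg hi]; rfl
  have hΦ : (∑ α : Fin (m+1), ∑ i : Fin k,
      p (sIdx α i) * (-1:ℝ) ^ (m + (α:ℕ)) *
        evalCLM m k i α (Pi.single i₀ (Pi.single α₀ 1))) =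
      p (sIdx α₀ i₀) * (-1:ℝ) ^ (m + (α₀:ℕ)) := by
    rw [Finset.sum_eq_single α₀]
    · rw [Finset.sum_eq_single i₀]
      · rw [heval, if_pos rfl, if_pos rfl, mul_one]
      · intro i _ hi; rw [heval, if_neg hi, mul_zero]
      · intro hc; exact absurd (Finset.mem_univ i₀) hc
    · intro α _ hα
      apply Finset.sum_eq_zero
      intro i _
      rw [heval]
      by_cases hi : i = i₀
      · rw [if_pos hi, if_neg hα, mul_zero]
      · rw [if_neg hi, mul_zero]
    · intro hc; exact absurd (Finset.mem_univ α₀) hc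
  rw [hΦ]
  rfl

end Deriv

section Main

lemma neg_one_pow_mul_self (r : ℕ) (x : ℝ) : (-1:ℝ)^r * ((-1:ℝ)^r * x) = x := by
  rw [← mul_assoc, ← pow_add, Even.neg_one_pow ⟨r, rfl⟩, one_mul]

lemma neg_one_pow_shift (m a : ℕ) : (-1:ℝ)^(m+1+1+a) = (-1:ℝ)^(m+a) := by
  have h : m+1+1+a = (m+a) + 2 := by ring
  rw [h, pow_add]
  norm_num

theorem stmt18' (m k : ℕ) (hk : 1 ≤ k)
    (L : (Fin (m+1+k) → ℝ) → (Fin k → Fin (m+1) → ℝ) → ℝ)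
    (hL : ContDiff ℝ (⊤ : ℕ∞) fun qv : (Fin (m+1+k) → ℝ) × (Fin k → Fin (m+1) → ℝ) => L qv.1 qv.2) :
    ∀ (q : Fin (m+1+k) → ℝ) (v : Fin k → Fin (m+1) → ℝ) (w : ℝ),
      ∃ p : MultiIdx (m+1+k) (m+1) → ℝ,
        Corresponds (m+1) k L q v w p ∧
        IsWeyl (m+1) k p ∧
        (∀ p' : MultiIdx (m+1+k) (m+1) → ℝ,
          IsWeyl (m+1) k p' → Corresponds (m+1) k L q v w p' → p' = p) ∧
        (∀ (α : Fin (m+1)) (i : Fin k),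
          (-1 : ℝ) ^ (m + 1 + 1 + (α : ℕ)) * p (sIdx α i) = dLdv L q v i α) ∧
        p (sZero (m+1) k) =
          w + L q v - ∑ α : Fin (m+1), ∑ i : Fin k, dLdv L q v i α * v i α := by
  intro q v w
  classical
  set p : MultiIdx (m+1+k) (m+1) → ℝ := fun s =>
    (if s = sZero (m+1) k then
        w + L q v - ∑ α : Fin (m+1), ∑ i : Fin k, dLdv L q v i α * v i α
      else 0) +
      ∑ α : Fin (m+1), ∑ i : Fin k,
        (if s = sIdx α i then (-1:ℝ)^(m+(α:ℕ)) * dLdv L q v i α else 0) with hpdef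
  have hpZero : p (sZero (m+1) k) =
      w + L q v - ∑ α : Fin (m+1), ∑ i : Fin k, dLdv L q v i α * v i α := by
    rw [hpdef]
    simp only
    rw [if_true]
    have h0 : ∀ (α : Fin (m+1)) (i : Fin k),
        (if sZero (m+1) k = sIdx α i then (-1:ℝ)^(m+(α:ℕ)) * dLdv L q v i α else 0) = 0 :=
      fun α i => if_neg (fun h => sIdx_ne_sZero α i h.symm)
    rw [Finset.sum_eq_zero fun α _ => Finset.sum_eq_zero fun i _ => h0 α i, add_zero]
  have hpIdx : ∀ (α : Fin (m+1)) (i : Fin k),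
      p (sIdx α i) = (-1:ℝ)^(m+(α:ℕ)) * dLdv L q v i α := by
    intro α i
    rw [hpdef]
    simp only
    rw [if_neg (sIdx_ne_sZero α i), zero_add]
    rw [Finset.sum_eq_single α]
    · rw [Finset.sum_eq_single i]
      · rw [if_pos rfl]
      · intro i' _ hi'
        exact if_neg (fun h => hi' ((sIdx_inj h).2.symm))
      · intro hc; exact absurd (Finset.mem_univ i) hc
    · intro α' _ hα'
      apply Finset.sum_eq_zero
      intro i' _
      exact if_neg (fun h => hα' ((sIdx_inj h).1.symm))
    · intro hc; exact absurd (Finset.mem_univ α) hc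
  have hpWeyl : IsWeyl (m+1) k p := by
    intro s hs0 hsi
    rw [hpdef]
    simp only
    rw [if_neg hs0, zero_add]
    apply Finset.sum_eq_zero
    intro α _
    apply Finset.sum_eq_zero
    intro i _
    exact if_neg (hsi α i)
  have hsq : ∀ (α : Fin (m+1)) (i : Fin k),
      p (sIdx α i) * ((-1:ℝ)^(m+(α:ℕ)) * v i α) = dLdv L q v i α * v i α := by
    intro α i
    rw [hpIdx α i]
    calc ((-1:ℝ)^(m+(α:ℕ)) * dLdv L q v i α) * ((-1:ℝ)^(m+(α:ℕ)) * v i α)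
        = (-1:ℝ)^(m+(α:ℕ)) * ((-1:ℝ)^(m+(α:ℕ)) * (dLdv L q v i α * v i α)) := by ring
      _ = dLdv L q v i α * v i α := neg_one_pow_mul_self _ _
  have hW : Wfun (m+1) k L q v p = w := by
    rw [Wfun_weyl L q v p hpWeyl, hpZero,
      Finset.sum_congr rfl fun α _ => Finset.sum_congr rfl fun i _ => hsq α i]
    ring
  have hD : ∀ (i : Fin k) (α : Fin (m+1)),
      fderiv ℝ (fun v' => Wfun (m+1) k L q v' p) v (Pi.single i (Pi.single α 1)) = 0 := by
    intro i α
    rw [fderiv_Wfun L hL q v p hpWeyl i α, hpIdx α i]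
    have h2 : ((-1:ℝ)^(m+(α:ℕ)) * dLdv L q v i α) * (-1:ℝ)^(m+(α:ℕ))
        = (-1:ℝ)^(m+(α:ℕ)) * ((-1:ℝ)^(m+(α:ℕ)) * dLdv L q v i α) := by ring
    rw [h2, neg_one_pow_mul_self, sub_self]
  refine ⟨p, ⟨hW, hD⟩, hpWeyl, ?_, ?_, hpZero⟩
  · -- uniqueness
    intro p' hp'W hp'C
    have hIdx' : ∀ (α : Fin (m+1)) (i : Fin k),
        p' (sIdx α i) = (-1:ℝ)^(m+(α:ℕ)) * dLdv L q v i α := by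
      intro α i
      have h0 := hp'C.2 i α
      rw [fderiv_Wfun L hL q v p' hp'W i α] at h0
      have h2 : p' (sIdx α i) * (-1:ℝ)^(m+(α:ℕ)) = dLdv L q v i α := by linarith
      have h3 : p' (sIdx α i) * ((-1:ℝ)^(m+(α:ℕ)) * (-1:ℝ)^(m+(α:ℕ)))
          = (-1:ℝ)^(m+(α:ℕ)) * dLdv L q v i α := by
        rw [← mul_assoc, h2]; ring
      rwa [← pow_add, Even.neg_one_pow ⟨m+(α:ℕ), by ring⟩, mul_one] at h3
    have hsq' : ∀ (α : Fin (m+1)) (i : Fin k),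
        p' (sIdx α i) * ((-1:ℝ)^(m+(α:ℕ)) * v i α) = dLdv L q v i α * v i α := by
      intro α i
      rw [hIdx' α i]
      calc ((-1:ℝ)^(m+(α:ℕ)) * dLdv L q v i α) * ((-1:ℝ)^(m+(α:ℕ)) * v i α)
          = (-1:ℝ)^(m+(α:ℕ)) * ((-1:ℝ)^(m+(α:ℕ)) * (dLdv L q v i α * v i α)) := by ring
        _ = dLdv L q v i α * v i α := neg_one_pow_mul_self _ _
    have hZero' : p' (sZero (m+1) k) =
        w + L q v - ∑ α : Fin (m+1), ∑ i : Fin k, dLdv L q v i α * v i α := by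
      have h0 := hp'C.1
      rw [Wfun_weyl L q v p' hp'W,
        Finset.sum_congr rfl fun α _ => Finset.sum_congr rfl fun i _ => hsq' α i] at h0
      linarith
    funext s
    by_cases hs0 : s = sZero (m+1) k
    · rw [hs0, hZero', hpZero]
    · by_cases hsi : ∃ (α : Fin (m+1)) (i : Fin k), s = sIdx α i
      · obtain ⟨α, i, rfl⟩ := hsi
        rw [hIdx' α i, hpIdx α i]
      · rw [hp'W s hs0 (fun α i h => hsi ⟨α, i, h⟩),
          hpWeyl s hs0 (fun α i h => hsi ⟨α, i, h⟩)]
  · intro α i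
    rw [hpIdx α i, neg_one_pow_shift, neg_one_pow_mul_self]

/-- For every `(q,v,w)` there is a `(q,p)` with `(q,v,w) ↔ (q,p)`, and it
is unique if required to lie in the Weyl submanifold; explicitly the unique Weyl solution
satisfies `p^α_i = ∂L/∂v^i_α (q,v)` (where `p^α_i = (−1)^{n+1+α} p_{sIdx α i}` accounts for
the increasing reordering of the index `(1,…,α−1, n+i, α+1,…,n)`) and
`ε = w + L(q,v) − Σ_{α,i} ∂L/∂v^i_α (q,v) · v^i_α`. -/
theorem stmt18 (n k : ℕ) (hn : 1 ≤ n) (hk : 1 ≤ k)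
    (L : (Fin (n + k) → ℝ) → (Fin k → Fin n → ℝ) → ℝ)
    (hL : ContDiff ℝ (⊤ : ℕ∞) fun qv : (Fin (n + k) → ℝ) × (Fin k → Fin n → ℝ) => L qv.1 qv.2) :
    ∀ (q : Fin (n + k) → ℝ) (v : Fin k → Fin n → ℝ) (w : ℝ),
      ∃ p : MultiIdx (n + k) n → ℝ,
        Corresponds n k L q v w p ∧
        IsWeyl n k p ∧
        (∀ p' : MultiIdx (n + k) n → ℝ,
          IsWeyl n k p' → Corresponds n k L q v w p' → p' = p) ∧
        (∀ (α : Fin n) (i : Fin k),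
          (-1 : ℝ) ^ (n + 1 + (α : ℕ)) * p (sIdx α i) = dLdv L q v i α) ∧
        p (sZero n k) = w + L q v - ∑ α : Fin n, ∑ i : Fin k, dLdv L q v i α * v i α := by
  obtain ⟨m, rfl⟩ : ∃ m, n = m + 1 := ⟨n - 1, by omega⟩
  exact stmt18' m k hk L hL

end Main
end
end
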